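/- arXiv:math/0606246 — 3 statements merged into one kernel-verified Lean document; each statement's English description precedes it below -/
import Mathlib

section
/- If Δ is a Cohen–Macaulay simplicial complex of dimension d−1 on n vertices with CM-connectivity sequence (q_0,…,q_{d−1}), then this sequence is strictly decreasing: 1 ≤ q_{d−1} < q_{d−2} < ⋯ < q_1 < q_0 = n. -/
open scoped Classical

namespace MultConj

variable {n : ℕ}

/-- `K` is (the set of faces of) an abstract simplicial complex on the
vertex set `Fin n`: it contains the empty face and is closed under subsets. -/
def IsComplex (K : Finset (Finset (Fin n))) : Prop :=
  ∅ ∈ K ∧ ∀ F ∈ K, ∀ G ⊆ F, G ∈ K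

/-- The induced subcomplex `Δ_W` on a vertex set `W`. -/
def induced (K : Finset (Finset (Fin n))) (W : Finset (Fin n)) :
    Finset (Finset (Fin n)) :=
  K.filter fun F => F ⊆ W

/-- The link of a face `F`. -/
def link (K : Finset (Finset (Fin n))) (F : Finset (Fin n)) :
    Finset (Finset (Fin n)) :=
  K.filter fun G => F ∩ G = ∅ ∧ F ∪ G ∈ K

/-- The `i`-skeleton: all faces of dimension at most `i`,
i.e. with at most `i+1` vertices. -/
def skel (K : Finset (Finset (Fin n))) (i : ℕ) : Finset (Finset (Fin n)) :=
  K.filter fun F => F.card ≤ i + 1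

/-- The number of faces with `j` vertices, i.e. `f_{j-1}(K)`. -/
def fcount (K : Finset (Finset (Fin n))) (j : ℕ) : ℕ :=
  (K.filter fun F => F.card = j).card

/-- The dimension of `K`, as an integer. -/
noncomputable def dimOf (K : Finset (Finset (Fin n))) : ℤ :=
  ((K.sup fun F => F.card : ℕ) : ℤ) - 1

variable (k : Type) [Field k]

/-- Simplicial chains supported on the faces of `K` having `j` vertices
(that is, `(j-1)`-dimensional chains), with coefficients in `k`. -/
abbrev chain (K : Finset (Finset (Fin n))) (j : ℕ) : Type :=
  {F : Finset (Fin n) // F ∈ K ∧ F.card = j} → k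

/-- The simplicial boundary operator (with the standard orientation coming
from the linear order on the vertices), viewed as landing in the space of
all functions on finsets. -/
noncomputable def bdry (K : Finset (Finset (Fin n))) (j : ℕ)
    (c : chain k K j) : Finset (Fin n) → k :=
  fun G => ∑ v : Fin n,
    if h : v ∉ G ∧ insert v G ∈ K ∧ (insert v G).card = j then
      (-1 : k) ^ (G.filter fun w => w < v).card * c ⟨insert v G, h.2⟩
    else 0

/-- Extension of a chain by zero to a function on all finsets. -/
def ext (K : Finset (Finset (Fin n))) (j : ℕ) (c : chain k K j) :
    Finset (Fin n) → k :=
  fun F => if h : F ∈ K ∧ F.card = j then c ⟨F, h⟩ else 0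

/-- `H̃_p(K; k) ≠ 0`: there is a reduced `p`-cycle which is not a boundary.
(For `p ≤ -2` this is false, as there is no `j : ℕ` with `j = p + 1`.) -/
def homNonzero (K : Finset (Finset (Fin n))) (p : ℤ) : Prop :=
  ∃ j : ℕ, (j : ℤ) = p + 1 ∧
    ∃ c : chain k K j, bdry k K j c = 0 ∧
      ∀ b : chain k K (j + 1), bdry k K (j + 1) b ≠ ext k K j c

/-- `H̃_p(K; k) ≅ k`: there is a reduced `p`-cycle `z` which is not a
boundary, and modulo boundaries every `p`-cycle is a multiple of `z`. -/
def homIsK (K : Finset (Finset (Fin n))) (p : ℤ) : Prop :=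
  ∃ j : ℕ, (j : ℤ) = p + 1 ∧
    ∃ z : chain k K j, bdry k K j z = 0 ∧
      (∀ b : chain k K (j + 1), bdry k K (j + 1) b ≠ ext k K j z) ∧
      ∀ c : chain k K j, bdry k K j c = 0 →
        ∃ a : k, ∃ b : chain k K (j + 1),
          bdry k K (j + 1) b = ext k K j (c - a • z)

/-- Cohen–Macaulayness of `K` over `k`, via Reisner's criterion:
`H̃_i(lk F; k) = 0` for every face `F` and every `i < dim K - |F|`. -/
def IsCM (K : Finset (Finset (Fin n))) : Prop :=
  ∀ F ∈ K, ∀ i : ℤ, i < dimOf K - F.card → ¬ homNonzero k (link K F) i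

/-- `K` is `q`-Cohen–Macaulay over `k`: removing any at most `q - 1`
vertices leaves a Cohen–Macaulay complex of the same dimension. -/
def IsQCM (q : ℕ) (K : Finset (Finset (Fin n))) : Prop :=
  ∀ U : Finset (Fin n), U.card ≤ q - 1 →
    IsCM k (induced K Uᶜ) ∧ dimOf (induced K Uᶜ) = dimOf K

/-- `q(K)`: the largest `q` for which `K` is `q`-CM over `k`. -/
noncomputable def qConn (K : Finset (Finset (Fin n))) : ℕ :=
  sSup {q : ℕ | IsQCM k q K}

/-- The CM-connectivity sequence: `q_i = q(Skel_i K)`. -/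
noncomputable def qSeq (K : Finset (Finset (Fin n))) (i : ℕ) : ℕ :=
  qConn k (skel K i)

/-- The minimal shifts `m_i` in the minimal free resolution of the face ring,
via Hochster's formula. -/
noncomputable def mshift (K : Finset (Finset (Fin n))) (i : ℕ) : ℕ :=
  sInf {m : ℕ | ∃ W : Finset (Fin n), W.card = m ∧
    homNonzero k (induced K W) ((W.card : ℤ) - i - 1)}

/-- The maximal shifts `M_i` in the minimal free resolution of the face ring,
via Hochster's formula. -/
noncomputable def Mshift (K : Finset (Finset (Fin n))) (i : ℕ) : ℕ :=
  sSup {m : ℕ | ∃ W : Finset (Fin n), W.card = m ∧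
    homNonzero k (induced K W) ((W.card : ℤ) - i - 1)}

/-- `K` is pure: every maximal face has cardinality `dim K + 1`. -/
def IsPure (K : Finset (Finset (Fin n))) : Prop :=
  ∀ F ∈ K, (∀ G ∈ K, F ⊆ G → G = F) → (F.card : ℤ) = dimOf K + 1

/-- `K` is connected: any two vertices are joined by a path of edges. -/
def Connected (K : Finset (Finset (Fin n))) : Prop :=
  ∀ u v : Fin n, {u} ∈ K → {v} ∈ K →
    Relation.ReflTransGen (fun a b => ({a, b} : Finset (Fin n)) ∈ K) u v

/-- `K` is Gorenstein* over `k`; by Stanley's topological characterization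
this means that `K` is a `k`-homology sphere: for every face `F` the link of
`F` has vanishing reduced homology below dimension `dim K - |F|` and reduced
homology isomorphic to `k` in dimension `dim K - |F|`. -/
def IsGorensteinStar (K : Finset (Finset (Fin n))) : Prop :=
  IsComplex K ∧
  (∀ F ∈ K, ∀ i : ℤ, i < dimOf K - F.card → ¬ homNonzero k (link K F) i) ∧
  (∀ F ∈ K, homIsK k (link K F) (dimOf K - F.card))

/-!
Deleting a vertex lowers the depth of the face ring by at most one: splitting chains along the
vertex `v` as in a Mayer–Vietoris argument, a cycle avoiding `v` that bounds in `Δ` also bounds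
in `Δ - v` once the matching cycles of `lk v` bound. The `i`-skeleton of a complex of depth
`> i` is Cohen–Macaulay of dimension `i`. Removing `q = q_{i+1}` vertices from `Skel_i Δ` is
removing `q - 1` of them from `Skel_{i+1} Δ`, which leaves a CM complex of dimension `i + 1`,
then one more, and taking the `i`-skeleton; so `Skel_i Δ` is `(q + 1)`-CM and `q_i > q_{i+1}`.
Finally `q_{d-1} ≥ 1` since `Δ` is CM, and `q_0 = n` since a `0`-dimensional complex is CM.
-/

open Finset

section Complexes

variable {K : Finset (Finset (Fin n))} {F G W : Finset (Fin n)}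

@[simp] lemma mem_induced : F ∈ induced K W ↔ F ∈ K ∧ F ⊆ W := mem_filter

@[simp] lemma mem_skel {i : ℕ} : F ∈ skel K i ↔ F ∈ K ∧ F.card ≤ i + 1 := mem_filter

@[simp] lemma mem_link : G ∈ link K F ↔ G ∈ K ∧ F ∩ G = ∅ ∧ F ∪ G ∈ K :=
  mem_filter

lemma IsComplex.induced (hK : IsComplex K) (W : Finset (Fin n)) : IsComplex (induced K W) :=
  ⟨mem_induced.2 ⟨hK.1, empty_subset W⟩, fun _ hF _ hG =>
    mem_induced.2 ⟨hK.2 _ (mem_induced.1 hF).1 _ hG, hG.trans (mem_induced.1 hF).2⟩⟩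

lemma IsComplex.skel (hK : IsComplex K) (i : ℕ) : IsComplex (skel K i) :=
  ⟨mem_skel.2 ⟨hK.1, by simp⟩, fun _ hF _ hG =>
    mem_skel.2 ⟨hK.2 _ (mem_skel.1 hF).1 _ hG, (card_le_card hG).trans (mem_skel.1 hF).2⟩⟩

lemma IsComplex.link (hK : IsComplex K) (hF : F ∈ K) : IsComplex (link K F) := by
  refine ⟨by simpa [hK.1] using hF, fun G hG G' hG' => ?_⟩
  obtain ⟨hGK, hFG, hFGK⟩ := mem_link.1 hG
  refine mem_link.2 ⟨hK.2 _ hGK _ hG', ?_, hK.2 _ hFGK _ (union_subset_union_right hG')⟩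
  exact subset_empty.1 (hFG ▸ inter_subset_inter_left hG')

lemma link_empty (K : Finset (Finset (Fin n))) : link K ∅ = K := by
  ext G
  simp

lemma link_eq_empty (hK : IsComplex K) (hF : F ∉ K) : link K F = ∅ :=
  eq_empty_of_forall_notMem fun _ hG => hF (hK.2 _ (mem_link.1 hG).2.2 _ subset_union_left)

lemma link_induced (hF : F ⊆ W) : link (induced K W) F = induced (link K F) W := by
  ext G
  simp only [mem_link, mem_induced]
  exact ⟨fun ⟨⟨hG, hGW⟩, hFG, hFGK, _⟩ => ⟨⟨hG, hFG, hFGK⟩, hGW⟩,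
    fun ⟨⟨hG, hFG, hFGK⟩, hGW⟩ => ⟨⟨hG, hGW⟩, hFG, hFGK, union_subset hF hGW⟩⟩

lemma link_link (hK : IsComplex K) {v : Fin n} (hv : v ∉ F) :
    link (link K F) {v} = link K (insert v F) := by
  ext G
  simp only [mem_link, ← disjoint_iff_inter_eq_empty, singleton_union, disjoint_singleton_left,
    disjoint_insert_left, disjoint_insert_right, insert_union, union_insert]
  constructor
  · rintro ⟨⟨hG, hFG, -⟩, hvG, -, -, hFvG⟩
    exact ⟨hG, ⟨hvG, hFG⟩, hFvG⟩
  · rintro ⟨hG, ⟨hvG, hFG⟩, hFvG⟩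
    exact ⟨⟨hG, hFG, hK.2 _ hFvG _ (subset_insert _ _)⟩, hvG,
      hK.2 _ hFvG _ (insert_subset_insert _ subset_union_right), ⟨hv, hFG⟩, hFvG⟩

lemma link_singleton_subset_induced (v : Fin n) : link K {v} ⊆ induced K {v}ᶜ := by
  intro G hG
  obtain ⟨hG, hvG, -⟩ := mem_link.1 hG
  refine mem_induced.2 ⟨hG, fun w hw => mem_compl.2 fun hwv => ?_⟩
  rw [mem_singleton.1 hwv] at hw
  simp [hw] at hvG

lemma induced_univ (K : Finset (Finset (Fin n))) : induced K univ = K :=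
  filter_true_of_mem fun F _ => subset_univ F

lemma induced_insert_compl (K : Finset (Finset (Fin n))) (v : Fin n) (U : Finset (Fin n)) :
    induced K (insert v U)ᶜ = induced (induced K Uᶜ) {v}ᶜ := by
  ext F
  simp only [mem_induced, subset_compl_iff_disjoint_right, disjoint_insert_right,
    disjoint_singleton_right]
  tauto

lemma induced_skel {i m : ℕ} (him : i ≤ m) (W : Finset (Fin n)) :
    induced (skel K i) W = skel (induced (skel K m) W) i := by
  ext F
  simp only [mem_induced, mem_skel]
  exact ⟨fun ⟨⟨hF, hi⟩, hW⟩ => ⟨⟨⟨hF, by omega⟩, hW⟩, hi⟩,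
    fun ⟨⟨⟨hF, _⟩, hW⟩, hi⟩ => ⟨⟨hF, hi⟩, hW⟩⟩

end Complexes

section Dimension

variable {K : Finset (Finset (Fin n))}

lemma le_dimOf {F : Finset (Fin n)} (hF : F ∈ K) : (F.card : ℤ) - 1 ≤ dimOf K := by
  have := le_sup (f := fun F : Finset (Fin n) => F.card) hF
  unfold dimOf
  omega

lemma dimOf_le {m : ℕ} (h : ∀ F ∈ K, F.card ≤ m) : dimOf K ≤ m - 1 := by
  have := Finset.sup_le (f := fun F : Finset (Fin n) => F.card) h
  unfold dimOf
  omega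

lemma neg_one_le_dimOf : -1 ≤ dimOf K := by
  unfold dimOf
  omega

lemma exists_card_eq_dimOf (hK : K.Nonempty) : ∃ F ∈ K, (F.card : ℤ) = dimOf K + 1 := by
  obtain ⟨F, hF, h⟩ := exists_mem_eq_sup K hK card
  exact ⟨F, hF, by rw [dimOf, ← h]; ring⟩

lemma dimOf_skel (hK : IsComplex K) {r : ℕ} (hr : (r : ℤ) ≤ dimOf K) :
    dimOf (skel K r) = r := by
  refine le_antisymm (by simpa using dimOf_le (m := r + 1) fun F hF => (mem_skel.1 hF).2) ?_
  obtain ⟨F, hF, hFc⟩ := exists_card_eq_dimOf ⟨∅, hK.1⟩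
  obtain ⟨G, hGF, hGc⟩ := exists_subset_card_eq (s := F) (n := r + 1) (by omega)
  have := le_dimOf (mem_skel.2 ⟨hK.2 F hF G hGF, hGc.le⟩)
  push_cast [hGc] at this
  omega

lemma dimOf_induced_empty : dimOf (induced K ∅) = -1 :=
  le_antisymm
    (by simpa using dimOf_le (m := 0) fun F hF => by simp [subset_empty.1 (mem_induced.1 hF).2])
    neg_one_le_dimOf

lemma dimOf_sub_one_le_induced (hK : IsComplex K) (v : Fin n) :
    dimOf K - 1 ≤ dimOf (induced K {v}ᶜ) := by
  obtain ⟨F, hF, hFc⟩ := exists_card_eq_dimOf ⟨∅, hK.1⟩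
  have := le_dimOf (K := induced K {v}ᶜ) (F := F.erase v)
    (mem_induced.2 ⟨hK.2 F hF _ (erase_subset v F), by simp⟩)
  have := pred_card_le_card_erase (s := F) (a := v)
  omega

end Dimension

section Boundary

variable {k}

noncomputable def boundary (f : Finset (Fin n) → k) (G : Finset (Fin n)) : k :=
  ∑ v ∈ Gᶜ, (-1 : k) ^ #{w ∈ G | w < v} * f (insert v G)

def IsChainOn (K : Finset (Finset (Fin n))) (j : ℕ) (f : Finset (Fin n) → k) : Prop :=
  ∀ F, f F ≠ 0 → F ∈ K ∧ F.card = j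

variable {K L : Finset (Finset (Fin n))} {j : ℕ} {f g : Finset (Fin n) → k} {p : ℤ}

lemma bdry_eq_boundary (K : Finset (Finset (Fin n))) (j : ℕ) (c : chain k K j) :
    bdry k K j c = boundary (ext k K j c) := by
  funext G
  rw [bdry, boundary, ← sum_subset (subset_univ Gᶜ) fun v _ hv => dif_neg fun h =>
    hv (mem_compl.2 h.1)]
  refine sum_congr rfl fun v hv => ?_
  by_cases h : insert v G ∈ K ∧ (insert v G).card = j
  · rw [dif_pos ⟨mem_compl.1 hv, h⟩, ext, dif_pos h]
  · rw [dif_neg fun h' => h h'.2, ext, dif_neg h, mul_zero]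

lemma boundary_add (f g : Finset (Fin n) → k) :
    boundary (f + g) = boundary f + boundary g := by
  funext G
  simp only [boundary, Pi.add_apply, mul_add, sum_add_distrib]

lemma boundary_zero : boundary (0 : Finset (Fin n) → k) = 0 := by
  funext G
  simp [boundary]

lemma isChainOn_ext (K : Finset (Finset (Fin n))) (j : ℕ) (c : chain k K j) :
    IsChainOn K j (ext k K j c) := fun F hF => by
  by_contra h
  exact hF (dif_neg h)

lemma IsChainOn.exists_ext_eq (hf : IsChainOn K j f) : ∃ c : chain k K j, ext k K j c = f := by
  refine ⟨fun F => f F, funext fun F => ?_⟩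
  by_cases h : F ∈ K ∧ F.card = j
  · exact dif_pos h
  · rw [ext, dif_neg h]
    by_contra h'
    exact h (hf F (Ne.symm h'))

lemma IsChainOn.mono (hKL : K ⊆ L) (hf : IsChainOn K j f) : IsChainOn L j f := fun F hF =>
  ⟨hKL (hf F hF).1, (hf F hF).2⟩

lemma IsChainOn.add (hf : IsChainOn K j f) (hg : IsChainOn K j g) : IsChainOn K j (f + g) :=
  fun F hF => by
    by_cases hfF : f F = 0
    · exact hg F fun hgF => hF (by simp [hfF, hgF])
    · exact hf F hfF

lemma isChainOn_congr (h : ∀ F : Finset (Fin n), F.card = j → (F ∈ K ↔ F ∈ L)) :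
    IsChainOn K j f ↔ IsChainOn L j f :=
  forall_congr' fun F => imp_congr_right fun _ =>
    ⟨fun ⟨hF, hc⟩ => ⟨(h F hc).1 hF, hc⟩, fun ⟨hF, hc⟩ => ⟨(h F hc).2 hF, hc⟩⟩

lemma homNonzero_iff : homNonzero k K p ↔ ∃ j : ℕ, (j : ℤ) = p + 1 ∧
    ∃ f : Finset (Fin n) → k, IsChainOn K j f ∧ boundary f = 0 ∧
      ∀ g, IsChainOn K (j + 1) g → boundary g ≠ f := by
  refine exists_congr fun j => and_congr_right fun _ => ⟨?_, ?_⟩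
  · rintro ⟨c, hc, hnb⟩
    refine ⟨ext k K j c, isChainOn_ext K j c, by rwa [← bdry_eq_boundary], fun g hg hgc => ?_⟩
    obtain ⟨b, rfl⟩ := hg.exists_ext_eq
    exact hnb b (by rw [bdry_eq_boundary, hgc])
  · rintro ⟨f, hf, hcyc, hnb⟩
    obtain ⟨c, rfl⟩ := hf.exists_ext_eq
    exact ⟨c, by rwa [bdry_eq_boundary], fun b hb =>
      hnb _ (isChainOn_ext K _ b) (by rw [← bdry_eq_boundary, hb])⟩

lemma not_homNonzero_iff : ¬ homNonzero k K p ↔ ∀ j : ℕ, (j : ℤ) = p + 1 →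
    ∀ f : Finset (Fin n) → k, IsChainOn K j f → boundary f = 0 →
      ∃ g, IsChainOn K (j + 1) g ∧ boundary g = f := by
  rw [homNonzero_iff]
  push Not
  rfl

lemma not_homNonzero_of_lt (hp : p < -1) : ¬ homNonzero k K p := by
  rintro ⟨j, hj, -⟩
  omega

lemma not_homNonzero_empty (p : ℤ) : ¬ homNonzero k (∅ : Finset (Finset (Fin n))) p := by
  refine not_homNonzero_iff.2 fun j _ f hf _ => ⟨0, fun F h => absurd rfl h, ?_⟩
  rw [boundary_zero]
  funext F
  by_contra h
  exact notMem_empty _ (hf F (Ne.symm h)).1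

lemma homNonzero_congr
    (h : ∀ F : Finset (Fin n), (F.card : ℤ) = p + 1 ∨ (F.card : ℤ) = p + 2 →
      (F ∈ K ↔ F ∈ L)) :
    homNonzero k K p ↔ homNonzero k L p := by
  simp only [homNonzero_iff]
  refine exists_congr fun j => and_congr_right fun hj => ?_
  simp only [isChainOn_congr (j := j) fun F hF => h F (Or.inl (by omega)),
    isChainOn_congr (j := j + 1) fun F hF => h F (Or.inr (by omega))]

lemma boundary_single_singleton (v : Fin n) (a : k) :
    boundary (Pi.single {v} a) = Pi.single (∅ : Finset (Fin n)) a := by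
  funext G
  rcases G.eq_empty_or_nonempty with rfl | hG
  · rw [boundary, sum_eq_single v (fun w _ hw => by simp [hw]) (by simp)]
    simp
  · rw [Pi.single_eq_of_ne hG.ne_empty, boundary]
    refine sum_eq_zero fun w hw => ?_
    rw [Pi.single_eq_of_ne, mul_zero]
    intro h
    have := congrArg card h
    rw [card_insert_of_notMem (mem_compl.1 hw), card_singleton] at this
    exact hG.ne_empty (card_eq_zero.1 (by omega))

lemma not_homNonzero_neg_one {v : Fin n} (hv : {v} ∈ K) : ¬ homNonzero k K (-1) := by
  refine not_homNonzero_iff.2 fun j hj f hf _ => ⟨Pi.single {v} (f ∅), fun F hF => ?_, ?_⟩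
  · obtain rfl : F = {v} := by
      by_contra h
      exact hF (Pi.single_eq_of_ne h _)
    exact ⟨hv, by simp; omega⟩
  · rw [boundary_single_singleton]
    funext F
    by_cases hF : F = ∅
    · subst hF
      simp
    · rw [Pi.single_eq_of_ne hF]
      by_contra h
      exact hF (card_eq_zero.1 (by have := (hf F (Ne.symm h)).2; omega))

end Boundary

section Deletion

variable {k}

/- A function `f` on finsets is `deletePart v f` (its values on faces avoiding `v`) plus its
values on the faces `insert v H`, whose signed coefficients `linkPart v f` live on the link
of `v`. -/

def deletePart (v : Fin n) (f : Finset (Fin n) → k) (F : Finset (Fin n)) : k :=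
  if v ∈ F then 0 else f F

def linkPart (v : Fin n) (f : Finset (Fin n) → k) (H : Finset (Fin n)) : k :=
  if v ∈ H then 0 else (-1 : k) ^ #{w ∈ H | w < v} * f (insert v H)

variable {L : Finset (Finset (Fin n))} {j : ℕ} {f : Finset (Fin n) → k} {v : Fin n}

lemma neg_one_pow_card_filter_insert {H : Finset (Fin n)} {w : Fin n} (hw : w ∉ H) :
    (-1 : k) ^ #{u ∈ insert w H | u < v} =
      (if w < v then -1 else 1) * (-1) ^ #{u ∈ H | u < v} := by
  rw [filter_insert]
  split_ifs with h
  · rw [card_insert_of_notMem (by simp [hw]), pow_succ]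
    ring
  · simp

lemma boundary_linkPart (v : Fin n) (f : Finset (Fin n) → k) :
    boundary (linkPart v f) = -linkPart v (boundary f) := by
  funext H
  by_cases hvH : v ∈ H
  · simp [boundary, linkPart, hvH]
  rw [boundary, ← add_sum_erase _ _ (mem_compl.2 hvH), linkPart, if_pos (mem_insert_self v H),
    mul_zero, zero_add, Pi.neg_apply, linkPart, if_neg hvH, boundary, compl_insert, mul_sum,
    ← sum_neg_distrib]
  refine sum_congr rfl fun w hw => ?_
  obtain ⟨hwv, hwH⟩ : w ≠ v ∧ w ∉ H := by simpa using hw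
  rw [linkPart, if_neg (by simp [hvH, hwv.symm]), insert_comm,
    neg_one_pow_card_filter_insert hwH, neg_one_pow_card_filter_insert hvH]
  rcases hwv.lt_or_gt with h | h <;> simp [h, h.not_gt] <;> ring

lemma boundary_deletePart_add_linkPart (v : Fin n) (f : Finset (Fin n) → k) :
    boundary (deletePart v f) + linkPart v f = deletePart v (boundary f) := by
  funext F
  by_cases hvF : v ∈ F
  · simp [boundary, deletePart, linkPart, hvF]
  simp only [Pi.add_apply, deletePart, linkPart, if_neg hvF, boundary]
  rw [← add_sum_erase _ _ (mem_compl.2 hvF), ← add_sum_erase _ _ (mem_compl.2 hvF),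
    if_pos (mem_insert_self v F), mul_zero, zero_add, add_comm]
  congr 1
  refine sum_congr rfl fun w hw => ?_
  obtain ⟨hwv, -⟩ : w ≠ v ∧ w ∉ F := by simpa using hw
  rw [if_neg (by simp [hvF, hwv.symm])]

lemma deletePart_eq_self (hf : ∀ F, v ∈ F → f F = 0) : deletePart v f = f := by
  funext F
  unfold deletePart
  split_ifs with h
  · exact (hf F h).symm
  · rfl

lemma linkPart_eq_zero (hf : ∀ F, v ∈ F → f F = 0) : linkPart v f = 0 := by
  funext H
  unfold linkPart
  split_ifs
  · rfl
  · rw [hf _ (mem_insert_self v H), mul_zero, Pi.zero_apply]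

lemma IsChainOn.deletePart (hf : IsChainOn L j f) :
    IsChainOn (induced L {v}ᶜ) j (deletePart v f) := fun F hF => by
  unfold MultConj.deletePart at hF
  split_ifs at hF with hvF
  · exact absurd rfl hF
  · exact ⟨mem_induced.2 ⟨(hf F hF).1, by simpa using hvF⟩, (hf F hF).2⟩

lemma IsChainOn.linkPart (hL : IsComplex L) (hf : IsChainOn L (j + 1) f) :
    IsChainOn (link L {v}) j (linkPart v f) := fun H hH => by
  unfold MultConj.linkPart at hH
  split_ifs at hH with hvH
  · exact absurd rfl hH
  obtain ⟨hvHL, hc⟩ := hf _ (right_ne_zero_of_mul hH)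
  rw [card_insert_of_notMem hvH] at hc
  exact ⟨mem_link.2 ⟨hL.2 _ hvHL _ (subset_insert v H), singleton_inter_of_notMem hvH,
    by rwa [← insert_eq]⟩, by omega⟩

/-- Write the filling `g` of a cycle `∂g` avoiding `v` as its delete part plus `v` joined with
its link part: the link part is then a cycle of `lk v`, hence a boundary `∂u`, and
`∂(deletePart v g + u)` is the given cycle. -/
theorem not_homNonzero_induced_compl_singleton (hL : IsComplex L) {p : ℤ}
    (hLp : ¬ homNonzero k L p) (hlink : ¬ homNonzero k (link L {v}) p) :
    ¬ homNonzero k (induced L {v}ᶜ) p := by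
  rw [not_homNonzero_iff] at *
  intro j hj f hf hcyc
  have hfv : ∀ F, v ∈ F → f F = 0 := fun F hvF => by
    by_contra h
    simpa [hvF] using (mem_induced.1 (hf F h).1).2
  obtain ⟨g, hg, rfl⟩ := hLp j hj f (hf.mono (filter_subset _ L)) hcyc
  obtain ⟨u, hu, hug⟩ := hlink j hj (linkPart v g) (hg.linkPart hL)
    (by rw [boundary_linkPart, linkPart_eq_zero hfv, neg_zero])
  refine ⟨deletePart v g + u, hg.deletePart.add (hu.mono (link_singleton_subset_induced v)), ?_⟩
  rw [boundary_add, hug, boundary_deletePart_add_linkPart, deletePart_eq_self hfv]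

end Deletion

section Depth

/-- By Munkres' criterion, `DepthGE k K t` says that the face ring `k[K]` has depth at least `t`. -/
def DepthGE (K : Finset (Finset (Fin n))) (t : ℤ) : Prop :=
  ∀ F ∈ K, ∀ i : ℤ, i + F.card < t - 1 → ¬ homNonzero k (link K F) i

variable {k} {K : Finset (Finset (Fin n))} {t : ℤ}

lemma isCM_iff_depthGE : IsCM k K ↔ DepthGE k K (dimOf K + 1) :=
  ⟨fun h F hF i hi => h F hF i (by omega), fun h F hF i hi => h F hF i (by omega)⟩

lemma DepthGE.mono {t' : ℤ} (h : DepthGE k K t) (ht : t' ≤ t) : DepthGE k K t' :=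
  fun F hF i hi => h F hF i (by omega)

lemma DepthGE.induced_compl_singleton (hK : IsComplex K) (h : DepthGE k K t) (v : Fin n) :
    DepthGE k (induced K {v}ᶜ) (t - 1) := by
  intro F hF i hi
  obtain ⟨hFK, hFv⟩ := mem_induced.1 hF
  have hvF : v ∉ F := by simpa using hFv
  rw [link_induced hFv]
  refine not_homNonzero_induced_compl_singleton (hK.link hFK) (h F hFK i (by omega)) ?_
  rw [link_link hK hvF]
  by_cases hvFK : insert v F ∈ K
  · exact h _ hvFK i (by rw [card_insert_of_notMem hvF]; push_cast; omega)
  · rw [link_eq_empty hK hvFK]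
    exact not_homNonzero_empty i

lemma DepthGE.skel {r : ℕ} (h : DepthGE k K t) (hr : (r : ℤ) + 1 ≤ t) :
    DepthGE k (skel K r) (r + 1) := by
  intro F hF i hi
  obtain ⟨hFK, hFr⟩ := mem_skel.1 hF
  -- `H̃_i` only sees faces of size `i + 1` and `i + 2`; on those the two links agree.
  rw [homNonzero_congr (L := link K F) fun G hG => ?_]
  · exact h F hFK i (by omega)
  have := card_union_le F G
  have := card_le_card (subset_union_right (s₁ := F) (s₂ := G))
  simp only [mem_link, mem_skel]
  constructor
  · rintro ⟨⟨hGK, -⟩, hFG, hFGK, -⟩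
    exact ⟨hGK, hFG, hFGK⟩
  · rintro ⟨hGK, hFG, hFGK⟩
    exact ⟨⟨hGK, by omega⟩, hFG, hFGK, by omega⟩

lemma isCM_skel_of_depthGE (hK : IsComplex K) {r : ℕ} (h : DepthGE k K t)
    (ht : (r : ℤ) + 1 ≤ t) (hr : (r : ℤ) ≤ dimOf K) : IsCM k (skel K r) := by
  rw [isCM_iff_depthGE, dimOf_skel hK hr]
  exact h.skel ht

lemma isCM_of_dimOf_eq_zero (h : dimOf K = 0) : IsCM k K := by
  intro F hF i hi
  rw [h] at hi
  obtain hi | rfl : i < -1 ∨ i = -1 := by omega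
  · exact not_homNonzero_of_lt hi
  obtain rfl : F = ∅ := card_eq_zero.1 (by omega)
  obtain ⟨G, hG, hGc⟩ := exists_card_eq_dimOf ⟨∅, hF⟩
  obtain ⟨v, rfl⟩ := card_eq_one.1 (by omega : G.card = 1)
  rw [link_empty]
  exact not_homNonzero_neg_one hG

end Depth

section Connectivity

variable {k} {K : Finset (Finset (Fin n))} {q : ℕ}

lemma IsQCM.le_card (hK : 0 ≤ dimOf K) (h : IsQCM k q K) : q ≤ n := by
  by_contra! hq
  have := (h univ (by rw [card_univ, Fintype.card_fin]; omega)).2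
  rw [compl_univ, dimOf_induced_empty] at this
  omega

lemma isQCM_one (h : IsCM k K) : IsQCM k 1 K := fun U hU => by
  rw [card_eq_zero.1 (by omega : U.card = 0), compl_empty, induced_univ]
  exact ⟨h, rfl⟩

lemma le_qConn (hK : 0 ≤ dimOf K) (h : IsQCM k q K) : q ≤ qConn k K :=
  le_csSup ⟨n, fun _ => IsQCM.le_card hK⟩ h

lemma qConn_le_card (hK : 0 ≤ dimOf K) : qConn k K ≤ n :=
  csSup_le' fun _ => IsQCM.le_card hK

lemma isQCM_qConn (hK : 0 ≤ dimOf K) (h : IsQCM k q K) : IsQCM k (qConn k K) K :=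
  Nat.sSup_mem ⟨q, h⟩ ⟨n, fun _ => IsQCM.le_card hK⟩

theorem isQCM_succ_skel_of_skel_succ (hK : IsComplex K) {i : ℕ} (hi : (i : ℤ) + 1 ≤ dimOf K)
    (hq : IsQCM k q (skel K (i + 1))) : IsQCM k (q + 1) (skel K i) := by
  have hA : IsComplex (skel K (i + 1)) := hK.skel _
  have hdimA : dimOf (skel K (i + 1)) = i + 1 :=
    mod_cast dimOf_skel hK (r := i + 1) (by push_cast; omega)
  intro U hU
  rw [dimOf_skel hK (by omega), induced_skel (Nat.le_succ i)]
  suffices ∃ B, IsComplex B ∧ DepthGE k B (i + 1) ∧ (i : ℤ) ≤ dimOf B ∧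
      induced (skel K (i + 1)) Uᶜ = B by
    obtain ⟨B, hB, hBt, hBi, hAB⟩ := this
    rw [hAB]
    exact ⟨isCM_skel_of_depthGE hB hBt le_rfl hBi, dimOf_skel hB hBi⟩
  rcases U.eq_empty_or_nonempty with rfl | ⟨v, hv⟩
  · obtain ⟨hCM, hdim⟩ := hq ∅ (by simp)
    exact ⟨_, hA.induced _, (isCM_iff_depthGE.1 hCM).mono (by omega), by omega, rfl⟩
  · obtain ⟨hCM, hdim⟩ := hq (U.erase v) (by rw [card_erase_of_mem hv]; omega)
    have hC := hA.induced (U.erase v)ᶜ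
    have := dimOf_sub_one_le_induced hC v
    exact ⟨_, hC.induced {v}ᶜ,
      ((isCM_iff_depthGE.1 hCM).induced_compl_singleton hC v).mono (by omega), by omega,
      by rw [← induced_insert_compl, insert_erase hv]⟩

lemma isQCM_card_skel_zero (hn : 0 < n) (hv : ∀ v : Fin n, {v} ∈ K) : IsQCM k n (skel K 0) := by
  intro U hU
  obtain ⟨w, hw⟩ : ∃ w, w ∉ U := by
    by_contra! h
    rw [eq_univ_of_forall h, card_univ, Fintype.card_fin] at hU
    omega
  have hdim : ∀ W : Finset (Fin n), w ∈ W → dimOf (induced (skel K 0) W) = 0 := fun W hwW =>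
    le_antisymm (by simpa using dimOf_le (m := 1) fun F hF => (mem_skel.1 (mem_induced.1 hF).1).2)
      (by simpa using le_dimOf (mem_induced.2 ⟨mem_skel.2 ⟨hv w, by simp⟩,
        singleton_subset_iff.2 hwW⟩))
  have hU0 := hdim Uᶜ (mem_compl.2 hw)
  exact ⟨isCM_of_dimOf_eq_zero hU0, by rw [hU0, ← hdim univ (mem_univ w), induced_univ]⟩

end Connectivity

/-- Remark 3.3 (Fløystad): the CM-connectivity sequence of a `(d-1)`-dimensional
CM complex on `n` vertices is strictly decreasing:
`1 ≤ q_{d-1} < q_{d-2} < ⋯ < q_1 < q_0 = n`. -/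
theorem connectivity_sequence_strict_decreasing
    (n d : ℕ) (k : Type) [Field k] (K : Finset (Finset (Fin n)))
    (hd : 0 < d) (hK : IsComplex K) (hv : ∀ v : Fin n, {v} ∈ K)
    (hdim : dimOf K = (d : ℤ) - 1) (hCM : IsCM k K) :
    1 ≤ qSeq k K (d - 1) ∧
    (∀ i : ℕ, i + 1 ≤ d - 1 → qSeq k K (i + 1) < qSeq k K i) ∧
    qSeq k K 0 = n := by
  have hpos : ∀ r : ℕ, r ≤ d - 1 → 0 ≤ dimOf (skel K r) := fun r hr => by
    rw [dimOf_skel hK (r := r) (by omega)]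
    omega
  have hskelCM : ∀ r : ℕ, r ≤ d - 1 → IsQCM k 1 (skel K r) := fun r hr =>
    isQCM_one (isCM_skel_of_depthGE hK (isCM_iff_depthGE.1 hCM) (by omega) (by omega))
  have hn : 0 < n := by
    obtain ⟨F, -, hF⟩ := exists_card_eq_dimOf ⟨∅, hK.1⟩
    obtain ⟨v, -⟩ := card_pos.1 (by omega : 0 < F.card)
    exact v.pos
  refine ⟨le_qConn (hpos _ le_rfl) (hskelCM _ le_rfl), fun i hi => ?_, ?_⟩
  · have hQ := isQCM_qConn (hpos _ hi) (hskelCM _ hi)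
    exact le_qConn (hpos i (by omega)) (isQCM_succ_skel_of_skel_succ hK (by omega) hQ)
  · exact le_antisymm (qConn_le_card (hpos 0 (Nat.zero_le _)))
      (le_qConn (hpos 0 (Nat.zero_le _)) (isQCM_card_skel_zero hn hv))

end MultConj
end

section
/- Let n and d be positive integers with d ≤ n, and let q_1 > q_2 > ⋯ > q_{d−1} be a strictly decreasing sequence of integers satisfying q_{d−1} ≥ 2 and q_1 ≤ n−d+1. Then d! · ∏_{i=1}^{d−1}(n−i) ≤ ∏_{i=1}^{d−1} q_i(n−q_i+1). -/
open scoped Classical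

namespace MultConj

variable {n : ℕ}

variable (k : Type) [Field k]

/-!
Reflecting `i ↦ d - i` rewrites `d! ∏ (n - i)` as `∏ a_i (n + 1 - a_i)` with `a_i = d - i + 1`.
A strictly decreasing integer sequence ending at `≥ 2` and starting at `≤ n - d + 1` satisfies
`a_i ≤ q_i ≤ n + 1 - a_i`, and `x ↦ x (n + 1 - x)` is smallest at the ends of such an interval, so
the products compare factor by factor.
-/

open Finset Nat

theorem prod_Icc_one_reflect {M : Type*} [CommMonoid M] (f : ℕ → M) (m : ℕ) :
    ∏ i ∈ Icc 1 m, f (m + 1 - i) = ∏ i ∈ Icc 1 m, f i := by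
  simpa [Ico_add_one_right_eq_Icc] using prod_Ico_reflect f 1 (Nat.le_succ (m + 1))

theorem prod_Icc_one_add_one_eq_factorial {R : Type*} [CommSemiring R] (m : ℕ) :
    ∏ i ∈ Icc 1 m, ((i : R) + 1) = (m + 1)! := by
  induction m with
  | zero => simp
  | succ m ih =>
    rw [prod_Icc_succ_top (by omega), ih, factorial_succ (m + 1)]
    push_cast
    ring

theorem factorial_mul_prod_Icc_sub (n m : ℕ) :
    ((m + 1)! : ℤ) * ∏ i ∈ Icc 1 m, ((n : ℤ) - i) =
      ∏ i ∈ Icc 1 m, (((m : ℤ) + 2 - i) * ((n : ℤ) + 1 - ((m : ℤ) + 2 - i))) := by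
  rw [← prod_Icc_one_add_one_eq_factorial, ← prod_mul_distrib,
    ← prod_Icc_one_reflect (fun j : ℕ => ((j : ℤ) + 1) * ((n : ℤ) - j))]
  refine prod_congr rfl fun i hi => ?_
  rw [mem_Icc] at hi
  push_cast [Nat.cast_sub (by omega : i ≤ m + 1)]
  ring

theorem mul_sub_le_mul_sub {R : Type*} [CommRing R] [LinearOrder R] [IsStrictOrderedRing R]
    {a x s : R} (hax : a ≤ x) (hxs : x ≤ s - a) : a * (s - a) ≤ x * (s - x) := by
  nlinarith [mul_nonneg (sub_nonneg.2 hax) (sub_nonneg.2 hxs)]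

theorem add_sub_le_of_forall_succ_lt {q : ℕ → ℤ} {i j : ℕ} (hij : i ≤ j)
    (h : ∀ k, i ≤ k → k < j → q (k + 1) < q k) : q j + ((j : ℤ) - i) ≤ q i := by
  induction j, hij using Nat.le_induction with
  | base => simp
  | succ j hij ih =>
    have hstep := h j hij (by omega)
    have hprev := ih fun k hik hkj => h k hik (by omega)
    push_cast
    omega

theorem arithmetic_ineq_2CM_general
    (n d : ℕ) (q : ℕ → ℤ) (hd : 0 < d) (hdn : d ≤ n)
    (hdec : ∀ i : ℕ, 1 ≤ i → i < d - 1 → q (i + 1) < q i)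
    (hlast : 1 < d → 2 ≤ q (d - 1))
    (hfirst : 1 < d → q 1 ≤ (n : ℤ) - d + 1) :
    (d.factorial : ℤ) * ∏ i ∈ Finset.Icc 1 (d - 1), ((n : ℤ) - i) ≤
      ∏ i ∈ Finset.Icc 1 (d - 1), q i * ((n : ℤ) - q i + 1) := by
  obtain ⟨m, rfl⟩ := Nat.exists_eq_add_one.2 hd
  simp only [Nat.add_sub_cancel] at hdec hlast ⊢
  rw [factorial_mul_prod_Icc_sub]
  refine prod_le_prod (fun i hi => ?_) (fun i hi => ?_) <;> rw [mem_Icc] at hi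
  · have hmn : (m : ℤ) + 1 ≤ n := by exact_mod_cast hdn
    exact mul_nonneg (by omega) (by omega)
  · have hlow := add_sub_le_of_forall_succ_lt hi.2 fun k hik _ => hdec k (by omega) (by omega)
    have hup := add_sub_le_of_forall_succ_lt hi.1 fun k _ hki => hdec k (by omega) (by omega)
    have hq_last := hlast (by omega)
    have hq_first := hfirst (by omega)
    push_cast at hq_first
    calc _ ≤ q i * ((n : ℤ) + 1 - q i) := mul_sub_le_mul_sub (by omega) (by omega)
      _ = _ := by ring

/-- The key arithmetic inequality in the 2-CM case: if
`q_1 > q_2 > ⋯ > q_{d-1}` are integers with `q_{d-1} ≥ 2` and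
`q_1 ≤ n - d + 1`, then `d! ∏_{i=1}^{d-1} (n - i) ≤ ∏_{i=1}^{d-1} q_i (n - q_i + 1)`. -/
theorem arithmetic_ineq_2CM
    (n d : ℕ) (q : ℕ → ℤ) (hn : 0 < n) (hd : 0 < d) (hdn : d ≤ n)
    (hdec : ∀ i : ℕ, 1 ≤ i → i < d - 1 → q (i + 1) < q i)
    (hlast : 1 < d → 2 ≤ q (d - 1))
    (hfirst : 1 < d → q 1 ≤ (n : ℤ) - d + 1) :
    (d.factorial : ℤ) * ∏ i ∈ Finset.Icc 1 (d - 1), ((n : ℤ) - i) ≤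
      ∏ i ∈ Finset.Icc 1 (d - 1), q i * ((n : ℤ) - q i + 1) :=
  arithmetic_ineq_2CM_general n d q hd hdn hdec hlast hfirst

end MultConj
end

section
/- Let n and d be positive integers with d ≤ n, and let q_1 > q_2 > ⋯ > q_{d−1} be a strictly decreasing sequence of integers satisfying q_{d−1} ≥ d and q_1 ≤ n−1. Then d! · ∏_{i=1}^{d−1}(n−i) ≤ ∏_{i=1}^{d−1} q_i(n−q_i+1). -/
open scoped Classical

namespace MultConj

variable {n : ℕ}

variable (k : Type) [Field k]

theorem prod_Icc_add_one_eq_factorial (d : ℕ) :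
    ∏ i ∈ Finset.Icc 1 (d - 1), (i + 1) = d.factorial := by
  rcases d with _ | m
  · rfl
  · rw [← Finset.prod_range_add_one_eq_factorial, Finset.range_eq_Ico,
      Finset.prod_eq_prod_Ico_succ_bot m.succ_pos]
    simp [Nat.succ_eq_add_one, Finset.Ico_add_one_right_eq_Icc]

theorem add_sub_le_of_succ_lt {q : ℕ → ℤ} {a b : ℕ}
    (hq : ∀ i, a ≤ i → i < b → q (i + 1) < q i) {i j : ℕ} (hai : a ≤ i) (hij : i ≤ j)
    (hjb : j ≤ b) : q j + (j - i) ≤ q i := by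
  induction j, hij using Nat.le_induction with
  | base => simp
  | succ j hij ih =>
    have hstep := hq j (hai.trans hij) hjb
    push_cast
    linarith [ih (by omega)]

/-- An integer sequence that strictly decreases drops by at least one per step, so the bounds
`q_{d-1} ≥ d` and `q_1 ≤ n - 1` at its two ends propagate inward. -/
theorem add_one_le_and_le_sub_of_succ_lt {n d : ℕ} {q : ℕ → ℤ}
    (hdec : ∀ i : ℕ, 1 ≤ i → i < d - 1 → q (i + 1) < q i)
    (hlast : (d : ℤ) ≤ q (d - 1)) (hfirst : q 1 ≤ (n : ℤ) - 1)
    {i : ℕ} (hi : i ∈ Finset.Icc 1 (d - 1)) : (i : ℤ) + 1 ≤ q i ∧ q i ≤ (n : ℤ) - i := by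
  rw [Finset.mem_Icc] at hi
  have hlo := add_sub_le_of_succ_lt hdec hi.1 hi.2 le_rfl
  have hhi := add_sub_le_of_succ_lt hdec le_rfl hi.1 hi.2
  omega

/-- `x ↦ x (n - x + 1)` is concave and symmetric about `(n + 1) / 2`, so on `[i + 1, n - i]`
it is smallest at the endpoints. -/
theorem mul_sub_le_mul_sub_add_one {R : Type*} [CommRing R] [LinearOrder R]
    [IsStrictOrderedRing R] {n i x : R} (hlo : i + 1 ≤ x) (hhi : x ≤ n - i) :
    (i + 1) * (n - i) ≤ x * (n - x + 1) := by
  nlinarith [mul_nonneg (sub_nonneg.2 hlo) (sub_nonneg.2 hhi)]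

theorem arithmetic_ineq_dCM_general
    (n d : ℕ) (q : ℕ → ℤ)
    (hdec : ∀ i : ℕ, 1 ≤ i → i < d - 1 → q (i + 1) < q i)
    (hlast : 1 < d → (d : ℤ) ≤ q (d - 1))
    (hfirst : 1 < d → q 1 ≤ (n : ℤ) - 1) :
    (d.factorial : ℤ) * ∏ i ∈ Finset.Icc 1 (d - 1), ((n : ℤ) - i) ≤
      ∏ i ∈ Finset.Icc 1 (d - 1), q i * ((n : ℤ) - q i + 1) := by
  have hbounds : ∀ i ∈ Finset.Icc 1 (d - 1), (i : ℤ) + 1 ≤ q i ∧ q i ≤ (n : ℤ) - i := by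
    intro i hi
    have hd : 1 < d := by rw [Finset.mem_Icc] at hi; omega
    exact add_one_le_and_le_sub_of_succ_lt hdec (hlast hd) (hfirst hd) hi
  calc (d.factorial : ℤ) * ∏ i ∈ Finset.Icc 1 (d - 1), ((n : ℤ) - i)
      = ∏ i ∈ Finset.Icc 1 (d - 1), ((i : ℤ) + 1) * ((n : ℤ) - i) := by
        rw [Finset.prod_mul_distrib, ← prod_Icc_add_one_eq_factorial]
        push_cast
        rfl
    _ ≤ ∏ i ∈ Finset.Icc 1 (d - 1), q i * ((n : ℤ) - q i + 1) := by
        refine Finset.prod_le_prod (fun i hi => ?_) (fun i hi => ?_)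
        · obtain ⟨hlo, hhi⟩ := hbounds i hi
          exact mul_nonneg (by positivity) (by linarith)
        · obtain ⟨hlo, hhi⟩ := hbounds i hi
          exact mul_sub_le_mul_sub_add_one hlo hhi

/-- The key arithmetic inequality in the `d`-CM case: if
`q_1 > q_2 > ⋯ > q_{d-1}` are integers with `q_{d-1} ≥ d` and `q_1 ≤ n - 1`,
then `d! ∏_{i=1}^{d-1} (n - i) ≤ ∏_{i=1}^{d-1} q_i (n - q_i + 1)`. -/
theorem arithmetic_ineq_dCM
    (n d : ℕ) (q : ℕ → ℤ) (hn : 0 < n) (hd : 0 < d) (hdn : d ≤ n)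
    (hdec : ∀ i : ℕ, 1 ≤ i → i < d - 1 → q (i + 1) < q i)
    (hlast : 1 < d → (d : ℤ) ≤ q (d - 1))
    (hfirst : 1 < d → q 1 ≤ (n : ℤ) - 1) :
    (d.factorial : ℤ) * ∏ i ∈ Finset.Icc 1 (d - 1), ((n : ℤ) - i) ≤
      ∏ i ∈ Finset.Icc 1 (d - 1), q i * ((n : ℤ) - q i + 1) :=
  arithmetic_ineq_dCM_general n d q hdec hlast hfirst

end MultConj
end
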